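/- arXiv:1601.03710 — 7 statements merged into one kernel-verified Lean document; each statement's English description precedes it below -/
import Mathlib

section
/- Let P be a finite poset and let J(P) denote its set of order ideals, with order-ideal toggles t_p. For p, q ∈ P, the toggles t_p and t_q commute (i.e., (t_p ∘ t_q)^2 = id on J(P)) if and only if there is no covering relation between p and q in P. -/
/-- `I` is an order ideal (down-closed set) of the poset `α`. -/
def IsOrderIdeal {α : Type*} [PartialOrder α] (I : Set α) : Prop :=
  ∀ x y, y ∈ I → x ≤ y → x ∈ I

open Classical in
/-- The order ideal toggle `t_p`. -/
noncomputable def oiToggle {α : Type*} [PartialOrder α] (p : α) (I : Set α) : Set α :=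
  if IsOrderIdeal (symmDiff I {p}) then symmDiff I {p} else I

section Aux

variable {α : Type*} [PartialOrder α] {I : Set α} {p q : α}

lemma mem_sd_of_mem (hp : p ∈ I) (x : α) : x ∈ symmDiff I {p} ↔ x ∈ I ∧ x ≠ p := by
  simp only [Set.mem_symmDiff, Set.mem_singleton_iff]
  constructor
  · rintro (⟨h1, h2⟩ | ⟨rfl, h2⟩)
    · exact ⟨h1, h2⟩
    · exact absurd hp h2
  · rintro ⟨h1, h2⟩; exact Or.inl ⟨h1, h2⟩

lemma mem_sd_of_not_mem (hp : p ∉ I) (x : α) : x ∈ symmDiff I {p} ↔ x ∈ I ∨ x = p := by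
  simp only [Set.mem_symmDiff, Set.mem_singleton_iff]
  constructor
  · rintro (⟨h1, _⟩ | ⟨rfl, _⟩)
    · exact Or.inl h1
    · exact Or.inr rfl
  · rintro (h | rfl)
    · exact Or.inl ⟨h, fun e => hp (e ▸ h)⟩
    · exact Or.inr ⟨rfl, hp⟩

lemma fires_mem (hI : IsOrderIdeal I) (hp : p ∈ I) :
    IsOrderIdeal (symmDiff I {p}) ↔ ∀ y ∈ I, ¬ p < y := by
  constructor
  · intro h y hy hlt
    have hyS : y ∈ symmDiff I {p} :=
      (mem_sd_of_mem hp y).2 ⟨hy, fun e => by subst e; exact lt_irrefl _ hlt⟩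
    have : p ∈ symmDiff I {p} := h p y hyS hlt.le
    exact ((mem_sd_of_mem hp p).1 this).2 rfl
  · intro h x y hy hxy
    obtain ⟨hyI, hyp⟩ := (mem_sd_of_mem hp y).1 hy
    refine (mem_sd_of_mem hp x).2 ⟨hI x y hyI hxy, ?_⟩
    rintro rfl
    exact h y hyI (lt_of_le_of_ne hxy (Ne.symm hyp))

lemma fires_not_mem (hI : IsOrderIdeal I) (hp : p ∉ I) :
    IsOrderIdeal (symmDiff I {p}) ↔ ∀ x, x < p → x ∈ I := by
  constructor
  · intro h x hx
    have hpS : p ∈ symmDiff I {p} := (mem_sd_of_not_mem hp p).2 (Or.inr rfl)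
    have := h x p hpS hx.le
    rcases (mem_sd_of_not_mem hp x).1 this with h' | rfl
    · exact h'
    · exact absurd hx (lt_irrefl _)
  · intro h x y hy hxy
    rcases (mem_sd_of_not_mem hp y).1 hy with hyI | rfl
    · exact (mem_sd_of_not_mem hp x).2 (Or.inl (hI x y hyI hxy))
    · rcases eq_or_lt_of_le hxy with rfl | hlt
      · exact (mem_sd_of_not_mem hp x).2 (Or.inr rfl)
      · exact (mem_sd_of_not_mem hp x).2 (Or.inl (h x hlt))

lemma oiToggle_of_fires (h : IsOrderIdeal (symmDiff I {p})) :
    oiToggle p I = symmDiff I {p} := by simp [oiToggle, h]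

lemma oiToggle_of_not_fires (h : ¬ IsOrderIdeal (symmDiff I {p})) :
    oiToggle p I = I := by simp [oiToggle, h]

lemma oiToggle_isOrderIdeal (hI : IsOrderIdeal I) : IsOrderIdeal (oiToggle p I) := by
  unfold oiToggle
  split
  · assumption
  · exact hI

/-- Key lemma: if there is no covering relation between `p` and `q` (and `p ≠ q`),
toggling `p` does not change whether the `q`-toggle fires. -/
lemma fires_toggle (hpq : p ≠ q) (h1 : ¬ p ⋖ q) (h2 : ¬ q ⋖ p)
    (hI : IsOrderIdeal I) :
    IsOrderIdeal (symmDiff (oiToggle p I) {q}) ↔ IsOrderIdeal (symmDiff I {q}) := by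
  by_cases hf : IsOrderIdeal (symmDiff I {p})
  swap
  · rw [oiToggle_of_not_fires hf]
  rw [oiToggle_of_fires hf]
  set J := symmDiff I {p} with hJ
  by_cases hp : p ∈ I
  · -- toggle removes p ; J = I \ {p}
    have hrem : ∀ y ∈ I, ¬ p < y := (fires_mem hI hp).1 hf
    have hmemJ : ∀ x, x ∈ J ↔ x ∈ I ∧ x ≠ p := mem_sd_of_mem hp
    by_cases hq : q ∈ I
    · have hqJ : q ∈ J := (hmemJ q).2 ⟨hq, Ne.symm hpq⟩
      rw [fires_mem hf hqJ, fires_mem hI hq]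
      constructor
      · intro h y hyI hqy
        by_cases hyp : y = p
        · rw [hyp] at hqy
          -- q < p : use non-cover to get intermediate
          obtain ⟨r, hqr, hrp⟩ := (not_covBy_iff hqy).1 h2
          have hrI : r ∈ I := hI r p hp hrp.le
          have hrJ : r ∈ J := (hmemJ r).2 ⟨hrI, ne_of_lt hrp⟩
          exact h r hrJ hqr
        · exact h y ((hmemJ y).2 ⟨hyI, hyp⟩) hqy
      · intro h y hyJ hqy
        exact h y ((hmemJ y).1 hyJ).1 hqy
    · have hqJ : q ∉ J := fun hh => hq ((hmemJ q).1 hh).1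
      rw [fires_not_mem hf hqJ, fires_not_mem hI hq]
      constructor
      · intro h x hx
        exact ((hmemJ x).1 (h x hx)).1
      · intro h x hx
        refine (hmemJ x).2 ⟨h x hx, ?_⟩
        rintro rfl
        -- p < q : use non-cover to get intermediate, contradicting hrem
        obtain ⟨r, hpr, hrq⟩ := (not_covBy_iff hx).1 h1
        exact absurd hpr (hrem r (h r hrq))
  · -- toggle adds p ; J = I ∪ {p}
    have hadd : ∀ x, x < p → x ∈ I := (fires_not_mem hI hp).1 hf
    have hmemJ : ∀ x, x ∈ J ↔ x ∈ I ∨ x = p := mem_sd_of_not_mem hp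
    by_cases hq : q ∈ I
    · have hqJ : q ∈ J := (hmemJ q).2 (Or.inl hq)
      rw [fires_mem hf hqJ, fires_mem hI hq]
      constructor
      · intro h y hyI hqy
        exact h y ((hmemJ y).2 (Or.inl hyI)) hqy
      · intro h y hyJ hqy
        rcases (hmemJ y).1 hyJ with hyI | rfl
        · exact h y hyI hqy
        · obtain ⟨r, hqr, hrp⟩ := (not_covBy_iff hqy).1 h2
          exact h r (hadd r hrp) hqr
    · have hqJ : q ∉ J := by
        intro hh
        rcases (hmemJ q).1 hh with h' | h'
        · exact hq h'
        · exact hpq h'.symm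
      rw [fires_not_mem hf hqJ, fires_not_mem hI hq]
      constructor
      · intro h x hx
        rcases (hmemJ x).1 (h x hx) with h' | hxp
        · exact h'
        · rw [hxp] at hx
          obtain ⟨r, hpr, hrq⟩ := (not_covBy_iff hx).1 h1
          rcases (hmemJ r).1 (h r hrq) with hrI | hrp2
          · exact absurd (hI p r hrI hpr.le) hp
          · exact absurd (hrp2 ▸ hpr) (lt_irrefl _)
      · intro h x hx
        exact (hmemJ x).2 (Or.inl (h x hx))

/-- If `p ⋖ q`, the toggles do not commute. -/
lemma not_commute_of_covBy (h : p ⋖ q) :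
    ¬ ∀ I : Set α, IsOrderIdeal I →
        oiToggle p (oiToggle q I) = oiToggle q (oiToggle p I) := by
  intro hc
  set I : Set α := {x | x < q} with hIdef
  have hI : IsOrderIdeal I := fun x y hy hxy => lt_of_le_of_lt hxy hy
  have hpI : p ∈ I := h.1
  have hqI : q ∉ I := fun hh => lt_irrefl _ hh
  -- t_q I = I ∪ {q}
  have hfq : IsOrderIdeal (symmDiff I {q}) :=
    (fires_not_mem hI hqI).2 fun x hx => hx
  have htq : oiToggle q I = symmDiff I {q} := oiToggle_of_fires hfq
  -- t_p I = I \ {p}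
  have hfp : IsOrderIdeal (symmDiff I {p}) :=
    (fires_mem hI hpI).2 fun y hy hpy => h.2 hpy hy
  have htp : oiToggle p I = symmDiff I {p} := oiToggle_of_fires hfp
  -- p-toggle is inert on t_q I
  have hpJ : p ∈ symmDiff I {q} := (mem_sd_of_not_mem hqI p).2 (Or.inl hpI)
  have hqJ : q ∈ symmDiff I {q} := (mem_sd_of_not_mem hqI q).2 (Or.inr rfl)
  have hnf1 : ¬ IsOrderIdeal (symmDiff (symmDiff I {q}) {p}) := by
    rw [fires_mem hfq hpJ]
    intro hh
    exact hh q hqJ h.1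
  -- q-toggle is inert on t_p I
  have hpK : p ∉ symmDiff I {p} := fun hh => ((mem_sd_of_mem hpI p).1 hh).2 rfl
  have hqK : q ∉ symmDiff I {p} := fun hh => hqI ((mem_sd_of_mem hpI q).1 hh).1
  have hnf2 : ¬ IsOrderIdeal (symmDiff (symmDiff I {p}) {q}) := by
    rw [fires_not_mem hfp hqK]
    intro hh
    exact hpK (hh p h.1)
  have heq := hc I hI
  rw [htq, htp, oiToggle_of_not_fires hnf1, oiToggle_of_not_fires hnf2] at heq
  -- q is in LHS but not RHS
  exact hqK (heq ▸ hqJ)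

end Aux

/-- Cameron--Fon-der-Flaass: in the order ideal toggle group of a finite
poset `P`, the toggles `t_p` and `t_q` commute if and only if there is no covering
relation between `p` and `q`. -/
theorem oiToggle_commute_iff {α : Type*} [Fintype α] [PartialOrder α] (p q : α) :
    (∀ I : Set α, IsOrderIdeal I → oiToggle p (oiToggle q I) = oiToggle q (oiToggle p I))
      ↔ ¬ p ⋖ q ∧ ¬ q ⋖ p := by
  constructor
  · intro hc
    constructor
    · intro h
      exact not_commute_of_covBy h hc
    · intro h
      exact not_commute_of_covBy h (fun I hI => (hc I hI).symm)
  · rintro ⟨h1, h2⟩ I hI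
    by_cases hpq : p = q
    · subst hpq; rfl
    have L1 : IsOrderIdeal (symmDiff (oiToggle q I) {p}) ↔ IsOrderIdeal (symmDiff I {p}) :=
      fires_toggle (Ne.symm hpq) h2 h1 hI
    have L2 : IsOrderIdeal (symmDiff (oiToggle p I) {q}) ↔ IsOrderIdeal (symmDiff I {q}) :=
      fires_toggle hpq h1 h2 hI
    by_cases hfp : IsOrderIdeal (symmDiff I {p}) <;>
      by_cases hfq : IsOrderIdeal (symmDiff I {q})
    · have e3 : oiToggle p (oiToggle q I) = symmDiff (oiToggle q I) {p} :=
        oiToggle_of_fires (L1.2 hfp)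
      have e4 : oiToggle q (oiToggle p I) = symmDiff (oiToggle p I) {q} :=
        oiToggle_of_fires (L2.2 hfq)
      rw [e3, e4, oiToggle_of_fires hfq, oiToggle_of_fires hfp,
        symmDiff_assoc, symmDiff_assoc, symmDiff_comm ({q} : Set α) ({p} : Set α)]
    · have e4 : oiToggle q (oiToggle p I) = oiToggle p I :=
        oiToggle_of_not_fires (fun hh => hfq (L2.1 hh))
      rw [e4, oiToggle_of_not_fires hfq]
    · have e3 : oiToggle p (oiToggle q I) = oiToggle q I :=
        oiToggle_of_not_fires (fun hh => hfp (L1.1 hh))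
      rw [e3, oiToggle_of_not_fires hfp]
    · have e3 : oiToggle p (oiToggle q I) = oiToggle q I :=
        oiToggle_of_not_fires (fun hh => hfp (L1.1 hh))
      have e4 : oiToggle q (oiToggle p I) = oiToggle p I :=
        oiToggle_of_not_fires (fun hh => hfq (L2.1 hh))
      rw [e3, e4, oiToggle_of_not_fires hfq, oiToggle_of_not_fires hfp]
end

section
/- Let P be a finite poset and C(P) its set of chains, with chain toggles t_p. For distinct p, q ∈ P, the toggles t_p and t_q commute on C(P) if and only if p and q are comparable in P. -/
/-- `C` is a chain of the poset `α`: a set of pairwise comparable elements. -/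
def IsChainSet {α : Type*} [PartialOrder α] (C : Set α) : Prop :=
  ∀ x ∈ C, ∀ y ∈ C, x ≤ y ∨ y ≤ x

open Classical in
/-- The chain toggle `t_p`. -/
noncomputable def chainToggle {α : Type*} [PartialOrder α] (p : α) (C : Set α) : Set α :=
  if IsChainSet (symmDiff C {p}) then symmDiff C {p} else C

/-- `p` can be toggled into/out of `C` (for `C` a chain). -/
def TogOk {α : Type*} [PartialOrder α] (p : α) (C : Set α) : Prop :=
  ∀ x ∈ C, x ≠ p → (p ≤ x ∨ x ≤ p)

lemma isChainSet_symmDiff_iff {α : Type*} [PartialOrder α] {p : α} {C : Set α}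
    (hC : IsChainSet C) : IsChainSet (symmDiff C {p}) ↔ TogOk p C := by
  constructor
  · intro h x hx hxp
    by_cases hpC : p ∈ C
    · exact (hC p hpC x hx).imp id id
    · have hx' : x ∈ symmDiff C {p} := by
        rw [Set.mem_symmDiff]; exact Or.inl ⟨hx, by simpa using hxp⟩
      have hp' : p ∈ symmDiff C {p} := by
        rw [Set.mem_symmDiff]; exact Or.inr ⟨rfl, hpC⟩
      exact h p hp' x hx'
  · intro h x hx y hy
    rw [Set.mem_symmDiff] at hx hy
    rcases hx with ⟨hx, hxp⟩ | ⟨hx, _⟩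
    · rcases hy with ⟨hy, _⟩ | ⟨hy, _⟩
      · exact hC x hx y hy
      · simp only [Set.mem_singleton_iff] at hy
        subst hy
        exact (h x hx (by simpa using hxp)).symm.imp id id
    · simp only [Set.mem_singleton_iff] at hx
      subst hx
      rcases hy with ⟨hy, hyp⟩ | ⟨hy, hy'⟩
      · exact h y hy (by simpa using hyp)
      · simp only [Set.mem_singleton_iff] at hy; subst hy; left; rfl

lemma togOk_symmDiff_iff {α : Type*} [PartialOrder α] {p q : α}
    (hcomp : p ≤ q ∨ q ≤ p) (C : Set α) :
    TogOk p (symmDiff C {q}) ↔ TogOk p C := by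
  constructor
  · intro h x hx hxp
    by_cases hxq : x = q
    · subst hxq; exact hcomp
    · exact h x (by rw [Set.mem_symmDiff]; exact Or.inl ⟨hx, by simpa using hxq⟩) hxp
  · intro h x hx hxp
    rw [Set.mem_symmDiff] at hx
    rcases hx with ⟨hx, _⟩ | ⟨hx, _⟩
    · exact h x hx hxp
    · simp only [Set.mem_singleton_iff] at hx; subst hx
      exact hcomp

lemma chainToggle_isChainSet {α : Type*} [PartialOrder α] (p : α) {C : Set α}
    (hC : IsChainSet C) : IsChainSet (chainToggle p C) := by
  unfold chainToggle
  split
  · assumption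
  · exact hC

/-- in the chain toggle group of a finite poset `P`, for distinct `p, q`,
the toggles `t_p` and `t_q` commute if and only if `p` and `q` are comparable. -/
theorem chainToggle_commute_iff {α : Type*} [Fintype α] [PartialOrder α]
    (p q : α) (hpq : p ≠ q) :
    (∀ C : Set α, IsChainSet C →
        chainToggle p (chainToggle q C) = chainToggle q (chainToggle p C))
      ↔ (p ≤ q ∨ q ≤ p) := by
  constructor
  · -- comparability from commutation, by contraposition on the empty chain
    intro h
    by_contra hcomp
    push_neg at hcomp
    have hempty : IsChainSet (∅ : Set α) := by intro x hx; exact absurd hx (by simp)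
    have hq : chainToggle q (∅ : Set α) = {q} := by
      unfold chainToggle
      rw [if_pos]
      · simp [symmDiff]
      · have : symmDiff (∅ : Set α) {q} = {q} := by simp [symmDiff]
        rw [this]
        intro x hx y hy
        simp only [Set.mem_singleton_iff] at hx hy
        subst hx; subst hy; left; rfl
    have hp : chainToggle p (∅ : Set α) = {p} := by
      unfold chainToggle
      rw [if_pos]
      · simp [symmDiff]
      · have : symmDiff (∅ : Set α) {p} = {p} := by simp [symmDiff]
        rw [this]
        intro x hx y hy
        simp only [Set.mem_singleton_iff] at hx hy
        subst hx; subst hy; left; rfl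
    have hnot : ∀ a b : α, a ≠ b → ¬ a ≤ b → ¬ b ≤ a →
        chainToggle a ({b} : Set α) = {b} := by
      intro a b hab h1 h2
      unfold chainToggle
      rw [if_neg]
      intro hch
      have ha : a ∈ symmDiff ({b} : Set α) {a} := by
        rw [Set.mem_symmDiff]
        exact Or.inr ⟨rfl, by simpa using hab⟩
      have hb : b ∈ symmDiff ({b} : Set α) {a} := by
        rw [Set.mem_symmDiff]
        exact Or.inl ⟨rfl, by simpa using (Ne.symm hab)⟩
      rcases hch a ha b hb with h | h
      · exact h1 h
      · exact h2 h
    have heq := h ∅ hempty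
    rw [hq, hp, hnot p q hpq hcomp.1 hcomp.2, hnot q p (Ne.symm hpq) hcomp.2 hcomp.1] at heq
    exact hpq (Set.singleton_eq_singleton_iff.mp heq.symm)
  · -- commutation from comparability
    intro hcomp C hC
    have hCq : IsChainSet (chainToggle q C) := chainToggle_isChainSet q hC
    have hCp : IsChainSet (chainToggle p C) := chainToggle_isChainSet p hC
    by_cases hq : IsChainSet (symmDiff C {q}) <;>
      by_cases hp : IsChainSet (symmDiff C {p})
    · -- both toggles act
      have h1 : chainToggle q C = symmDiff C {q} := by unfold chainToggle; rw [if_pos hq]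
      have h2 : chainToggle p C = symmDiff C {p} := by unfold chainToggle; rw [if_pos hp]
      have hq' : IsChainSet (symmDiff (symmDiff C {q}) {p}) := by
        rw [isChainSet_symmDiff_iff (h1 ▸ hCq), togOk_symmDiff_iff hcomp,
          ← isChainSet_symmDiff_iff hC]
        exact hp
      have hp' : IsChainSet (symmDiff (symmDiff C {p}) {q}) := by
        rw [isChainSet_symmDiff_iff (h2 ▸ hCp), togOk_symmDiff_iff hcomp.symm,
          ← isChainSet_symmDiff_iff hC]
        exact hq
      rw [h1, h2]
      unfold chainToggle
      rw [if_pos hq', if_pos hp']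
      rw [symmDiff_right_comm]
    · -- only q acts
      have h1 : chainToggle q C = symmDiff C {q} := by unfold chainToggle; rw [if_pos hq]
      have h2 : chainToggle p C = C := by unfold chainToggle; rw [if_neg hp]
      have hq' : ¬ IsChainSet (symmDiff (symmDiff C {q}) {p}) := by
        rw [isChainSet_symmDiff_iff (h1 ▸ hCq), togOk_symmDiff_iff hcomp,
          ← isChainSet_symmDiff_iff hC]
        exact hp
      rw [h1, h2]
      unfold chainToggle
      rw [if_neg hq', if_pos hq]
    · -- only p acts
      have h1 : chainToggle q C = C := by unfold chainToggle; rw [if_neg hq]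
      have h2 : chainToggle p C = symmDiff C {p} := by unfold chainToggle; rw [if_pos hp]
      have hp' : ¬ IsChainSet (symmDiff (symmDiff C {p}) {q}) := by
        rw [isChainSet_symmDiff_iff (h2 ▸ hCp), togOk_symmDiff_iff hcomp.symm,
          ← isChainSet_symmDiff_iff hC]
        exact hq
      rw [h1, h2]
      unfold chainToggle
      rw [if_neg hp']
    · -- neither acts
      have h1 : chainToggle q C = C := by unfold chainToggle; rw [if_neg hq]
      have h2 : chainToggle p C = C := by unfold chainToggle; rw [if_neg hp]
      rw [h1, h2, h1]
end

section
/- Let P be a finite poset and A(P) its set of antichains, with antichain toggles t_p. For distinct p, q ∈ P, the toggles t_p and t_q commute on A(P) if and only if p and q are incomparable in P. -/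
/-- `A` is an antichain of the poset `α`: a set of pairwise incomparable elements. -/
def IsAntichainSet {α : Type*} [PartialOrder α] (A : Set α) : Prop :=
  ∀ x ∈ A, ∀ y ∈ A, x ≤ y → x = y

open Classical in
/-- The antichain toggle `t_p`. -/
noncomputable def acToggle {α : Type*} [PartialOrder α] (p : α) (A : Set α) : Set α :=
  if IsAntichainSet (symmDiff A {p}) then symmDiff A {p} else A

lemma symmDiff_singleton_of_mem {α : Type*} {A : Set α} {p : α} (h : p ∈ A) :
    symmDiff A {p} = A \ {p} := by
  ext x; by_cases hx : x = p <;> simp [Set.mem_symmDiff, hx, h]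

lemma symmDiff_singleton_of_not_mem {α : Type*} {A : Set α} {p : α} (h : p ∉ A) :
    symmDiff A {p} = A ∪ {p} := by
  ext x; by_cases hx : x = p <;> simp [Set.mem_symmDiff, hx, h]

lemma isAntichainSet_subset {α : Type*} [PartialOrder α] {A B : Set α}
    (hA : IsAntichainSet A) (hB : B ⊆ A) : IsAntichainSet B :=
  fun x hx y hy h => hA x (hB hx) y (hB hy) h

lemma isAntichainSet_acToggle {α : Type*} [PartialOrder α] {A : Set α} (p : α)
    (hA : IsAntichainSet A) : IsAntichainSet (acToggle p A) := by
  unfold acToggle; split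
  · assumption
  · exact hA

lemma mem_acToggle_ne {α : Type*} [PartialOrder α] {x p : α} (h : x ≠ p) (A : Set α) :
    x ∈ acToggle p A ↔ x ∈ A := by
  unfold acToggle; split <;> simp [Set.mem_symmDiff, h]

lemma cond_iff {α : Type*} [PartialOrder α] {A : Set α} {p : α}
    (hA : IsAntichainSet A) (hp : p ∉ A) :
    IsAntichainSet (symmDiff A {p}) ↔ ∀ x ∈ A, ¬x ≤ p ∧ ¬p ≤ x := by
  rw [symmDiff_singleton_of_not_mem hp]
  constructor
  · intro h x hx
    constructor
    · intro hle
      have hxp : x = p := h x (Or.inl hx) p (Or.inr rfl) hle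
      exact hp (hxp ▸ hx)
    · intro hle
      have hxp : p = x := h p (Or.inr rfl) x (Or.inl hx) hle
      subst hxp
      exact hp hx
  · intro h x hx y hy hle
    rcases hx with hx | hx <;> rcases hy with hy | hy
    · exact hA x hx y hy hle
    · simp only [Set.mem_singleton_iff] at hy; subst hy
      exact absurd hle (h x hx).1
    · simp only [Set.mem_singleton_iff] at hx; subst hx
      exact absurd hle (h y hy).2
    · simp only [Set.mem_singleton_iff] at hx hy; rw [hx, hy]

/-- Key lemma: toggling at `q` does not change whether toggling at `p` is allowed,
provided `p` and `q` are distinct and incomparable. -/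
lemma cond_toggle {α : Type*} [PartialOrder α] {A : Set α} {p q : α}
    (hne : p ≠ q) (h1 : ¬p ≤ q) (h2 : ¬q ≤ p) (hA : IsAntichainSet A) :
    IsAntichainSet (symmDiff (acToggle q A) {p}) ↔ IsAntichainSet (symmDiff A {p}) := by
  by_cases hpA : p ∈ A
  · have hpB : p ∈ acToggle q A := (mem_acToggle_ne hne A).mpr hpA
    rw [symmDiff_singleton_of_mem hpA, symmDiff_singleton_of_mem hpB]
    exact iff_of_true
      (isAntichainSet_subset (isAntichainSet_acToggle q hA) Set.diff_subset)
      (isAntichainSet_subset hA Set.diff_subset)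
  · have hpB : p ∉ acToggle q A := fun h => hpA ((mem_acToggle_ne hne A).mp h)
    rw [cond_iff (isAntichainSet_acToggle q hA) hpB, cond_iff hA hpA]
    constructor
    · intro h x hx
      by_cases hxq : x = q
      · subst hxq; exact ⟨h2, h1⟩
      · exact h x ((mem_acToggle_ne hxq A).mpr hx)
    · intro h x hx
      by_cases hxq : x = q
      · subst hxq; exact ⟨h2, h1⟩
      · exact h x ((mem_acToggle_ne hxq A).mp hx)

lemma acToggle_empty {α : Type*} [PartialOrder α] (p : α) :
    acToggle p (∅ : Set α) = {p} := by
  have h : symmDiff (∅ : Set α) {p} = {p} := by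
    ext x; simp [Set.mem_symmDiff]
  unfold acToggle
  rw [h, if_pos]
  intro x hx y hy _
  simp only [Set.mem_singleton_iff] at hx hy
  rw [hx, hy]

lemma acToggle_singleton_of_comp {α : Type*} [PartialOrder α] {p q : α}
    (hne : p ≠ q) (hle : p ≤ q ∨ q ≤ p) :
    acToggle p ({q} : Set α) = {q} := by
  have h : symmDiff ({q} : Set α) {p} = {p, q} := by
    ext x
    by_cases hx : x = p <;> by_cases hx' : x = q <;>
      simp_all [Set.mem_symmDiff, Ne.symm hne]
  unfold acToggle
  rw [h, if_neg]
  intro hac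
  rcases hle with hle | hle
  · exact hne (hac p (Or.inl rfl) q (Or.inr rfl) hle)
  · exact hne (hac q (Or.inr rfl) p (Or.inl rfl) hle).symm

lemma acToggle_of_pos {α : Type*} [PartialOrder α] {A : Set α} {p : α}
    (h : IsAntichainSet (symmDiff A {p})) : acToggle p A = symmDiff A {p} := by
  unfold acToggle; rw [if_pos h]

lemma acToggle_of_neg {α : Type*} [PartialOrder α] {A : Set α} {p : α}
    (h : ¬IsAntichainSet (symmDiff A {p})) : acToggle p A = A := by
  unfold acToggle; rw [if_neg h]

/-- in the antichain toggle group of a finite poset `P`, for distinct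
`p, q`, the toggles `t_p` and `t_q` commute if and only if `p` and `q` are
incomparable. -/
theorem acToggle_commute_iff {α : Type*} [Fintype α] [PartialOrder α]
    (p q : α) (hpq : p ≠ q) :
    (∀ A : Set α, IsAntichainSet A →
        acToggle p (acToggle q A) = acToggle q (acToggle p A))
      ↔ (¬ p ≤ q ∧ ¬ q ≤ p) := by
  constructor
  · intro hcomm
    by_contra hcon
    have hle : p ≤ q ∨ q ≤ p := by tauto
    have hempty : IsAntichainSet (∅ : Set α) := by intro x hx; exact absurd hx (by simp)
    have := hcomm ∅ hempty
    rw [acToggle_empty, acToggle_empty,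
      acToggle_singleton_of_comp hpq hle,
      acToggle_singleton_of_comp hpq.symm (hle.symm)] at this
    exact hpq (by rw [← Set.mem_singleton_iff, this]; rfl)
  · rintro ⟨h1, h2⟩ A hA
    by_cases hCp : IsAntichainSet (symmDiff A {p}) <;>
      by_cases hCq : IsAntichainSet (symmDiff A {q})
    · have c1 : IsAntichainSet (symmDiff (acToggle q A) {p}) :=
        (cond_toggle hpq h1 h2 hA).mpr hCp
      have c2 : IsAntichainSet (symmDiff (acToggle p A) {q}) :=
        (cond_toggle hpq.symm h2 h1 hA).mpr hCq
      rw [acToggle_of_pos c1, acToggle_of_pos c2, acToggle_of_pos hCp,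
        acToggle_of_pos hCq, symmDiff_assoc, symmDiff_assoc,
        symmDiff_comm ({q} : Set α) {p}]
    · have c2 : ¬IsAntichainSet (symmDiff (acToggle p A) {q}) := fun h =>
        hCq ((cond_toggle hpq.symm h2 h1 hA).mp h)
      rw [acToggle_of_neg c2, acToggle_of_neg hCq]
    · have c1 : ¬IsAntichainSet (symmDiff (acToggle q A) {p}) := fun h =>
        hCp ((cond_toggle hpq h1 h2 hA).mp h)
      rw [acToggle_of_neg c1, acToggle_of_neg hCp]
    · have c1 : ¬IsAntichainSet (symmDiff (acToggle q A) {p}) := fun h =>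
        hCp ((cond_toggle hpq h1 h2 hA).mp h)
      have c2 : ¬IsAntichainSet (symmDiff (acToggle p A) {q}) := fun h =>
        hCq ((cond_toggle hpq.symm h2 h1 hA).mp h)
      rw [acToggle_of_neg c1, acToggle_of_neg c2, acToggle_of_neg hCp,
        acToggle_of_neg hCq]
end

section
/- Let G be a finite simple graph and VC(G) its set of vertex covers, with vertex toggles t_v. For distinct vertices u, v, the toggles t_u and t_v commute on VC(G) if and only if there is no edge between u and v in G. -/
/-- `X` is a vertex cover of the graph `G`: every edge is incident to a vertex of `X`. -/
def IsVertexCover {V : Type*} (G : SimpleGraph V) (X : Set V) : Prop :=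
  ∀ x y, G.Adj x y → x ∈ X ∨ y ∈ X

open Classical in
/-- The vertex cover toggle `t_v`. -/
noncomputable def vcToggle {V : Type*} (G : SimpleGraph V) (v : V) (X : Set V) : Set V :=
  if IsVertexCover G (symmDiff X {v}) then symmDiff X {v} else X

/-! For a vertex cover `X`, the toggle `t_v` can always add `v`, and can remove `v` exactly when
every neighbour of `v` lies in `X`. Toggling `v` changes neither the membership of `u ≠ v` nor,
when `u` and `v` are not adjacent, the neighbourhood condition at `u`; hence `t_u` acts on `t_v X`
as it acts on `X`, and the two toggles commute. If `u ~ v`, then starting from the full vertex set,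
whichever of `u`, `v` is removed first blocks the removal of the other. -/

section Toggle

variable {V : Type*} {G : SimpleGraph V} {X Y : Set V} {u v w : V}

namespace IsVertexCover

theorem univ : IsVertexCover G Set.univ := fun _ _ _ => Or.inl trivial

theorem mono (hX : IsVertexCover G X) (hXY : X ⊆ Y) : IsVertexCover G Y :=
  fun x y hxy => (hX x y hxy).imp (@hXY x) (@hXY y)

theorem symmDiff_singleton_iff (hX : IsVertexCover G X) :
    IsVertexCover G (symmDiff X {v}) ↔ (v ∈ X → G.neighborSet v ⊆ X) := by
  constructor
  · intro hc hvX w hw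
    have hwv : w ≠ v := (G.ne_of_adj hw).symm
    simpa [Set.mem_symmDiff, hvX, hwv] using hc v w hw
  · intro hN
    by_cases hvX : v ∈ X
    · intro x y hxy
      have hxy' : x ≠ y := G.ne_of_adj hxy
      rcases eq_or_ne x v with rfl | hxv
      · simp [Set.mem_symmDiff, hxy'.symm, hN hvX hxy]
      rcases eq_or_ne y v with rfl | hyv
      · simp [Set.mem_symmDiff, hxy', hN hvX hxy.symm]
      simpa [Set.mem_symmDiff, hxv, hyv] using hX x y hxy
    · exact hX.mono fun w hw => by simp [Set.mem_symmDiff, hw, ne_of_mem_of_not_mem hw hvX]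

end IsVertexCover

theorem mem_vcToggle_of_ne (h : w ≠ v) : w ∈ vcToggle G v X ↔ w ∈ X := by
  unfold vcToggle
  split_ifs <;> simp [Set.mem_symmDiff, h]

theorem isVertexCover_vcToggle (hX : IsVertexCover G X) : IsVertexCover G (vcToggle G v X) := by
  rw [vcToggle]
  split_ifs with h
  exacts [h, hX]

theorem IsVertexCover.symmDiff_vcToggle_iff_of_not_adj (hX : IsVertexCover G X) (huv : u ≠ v)
    (h : ¬ G.Adj u v) :
    IsVertexCover G (symmDiff (vcToggle G v X) {u}) ↔ IsVertexCover G (symmDiff X {u}) := by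
  have hN : G.neighborSet u ⊆ vcToggle G v X ↔ G.neighborSet u ⊆ X :=
    forall₂_congr fun _ hw =>
      mem_vcToggle_of_ne (ne_of_mem_of_not_mem (s := G.neighborSet u) hw h)
  rw [(isVertexCover_vcToggle hX).symmDiff_singleton_iff, hX.symmDiff_singleton_iff,
    mem_vcToggle_of_ne huv, hN]

open Classical in
theorem IsVertexCover.vcToggle_vcToggle_of_not_adj (hX : IsVertexCover G X) (huv : u ≠ v)
    (h : ¬ G.Adj u v) :
    vcToggle G u (vcToggle G v X) =
      if IsVertexCover G (symmDiff X {u}) then symmDiff (vcToggle G v X) {u}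
      else vcToggle G v X := by
  rw [vcToggle, if_congr (hX.symmDiff_vcToggle_iff_of_not_adj huv h) rfl rfl]

theorem IsVertexCover.vcToggle_comm_of_not_adj (hX : IsVertexCover G X) (h : ¬ G.Adj u v) :
    vcToggle G u (vcToggle G v X) = vcToggle G v (vcToggle G u X) := by
  rcases eq_or_ne u v with rfl | huv
  · rfl
  rw [hX.vcToggle_vcToggle_of_not_adj huv h,
    hX.vcToggle_vcToggle_of_not_adj huv.symm (mt G.adj_symm h)]
  unfold vcToggle
  split_ifs <;> simp [symmDiff_right_comm]

theorem vcToggle_vcToggle_univ_of_adj (h : G.Adj u v) :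
    vcToggle G u (vcToggle G v Set.univ) = {v}ᶜ := by
  have hv : vcToggle G v Set.univ = {v}ᶜ := by
    rw [vcToggle, if_pos (IsVertexCover.univ.symmDiff_singleton_iff.2 fun _ => Set.subset_univ _)]
    exact top_symmDiff _
  have hu : ¬ IsVertexCover G (symmDiff ({v}ᶜ : Set V) {u}) := by
    have hcov : IsVertexCover G ({v}ᶜ : Set V) := hv ▸ isVertexCover_vcToggle IsVertexCover.univ
    rw [hcov.symmDiff_singleton_iff]
    exact fun hN => hN (G.ne_of_adj h) h rfl
  rw [hv, vcToggle, if_neg hu]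

end Toggle

theorem vcToggle_commute_iff_general {V : Type*} (G : SimpleGraph V)
    (u v : V) :
    (∀ X : Set V, IsVertexCover G X →
        vcToggle G u (vcToggle G v X) = vcToggle G v (vcToggle G u X))
      ↔ ¬ G.Adj u v := by
  refine ⟨fun hcomm hadj => ?_, fun h X hX => IsVertexCover.vcToggle_comm_of_not_adj hX h⟩
  have hcomm_univ := hcomm Set.univ IsVertexCover.univ
  rw [vcToggle_vcToggle_univ_of_adj hadj, vcToggle_vcToggle_univ_of_adj hadj.symm, compl_inj_iff,
    Set.singleton_eq_singleton_iff] at hcomm_univ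
  exact G.ne_of_adj hadj hcomm_univ.symm

/-- in the vertex cover toggle group of a finite graph `G`, for distinct
vertices `u, v`, the toggles `t_u` and `t_v` commute if and only if there is no edge
between `u` and `v`. -/
theorem vcToggle_commute_iff {V : Type*} [Fintype V] (G : SimpleGraph V)
    (u v : V) (huv : u ≠ v) :
    (∀ X : Set V, IsVertexCover G X →
        vcToggle G u (vcToggle G v X) = vcToggle G v (vcToggle G u X))
      ↔ ¬ G.Adj u v :=
  vcToggle_commute_iff_general G u v
end

section
/- Let P be a finite poset and IC(P) its set of interval-closed sets, with toggles t_p. For distinct p, q ∈ P, the toggles t_p and t_q commute on IC(P) if and only if either p and q are incomparable, or (up to swapping) q covers p with p minimal in P and q maximal in P. -/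
set_option linter.unusedSectionVars false

/-- `I` is an interval-closed set of the poset `α`: whenever `x, y ∈ I` and
`x ≤ z ≤ y`, also `z ∈ I`. -/
def IsIntervalClosed {α : Type*} [PartialOrder α] (I : Set α) : Prop :=
  ∀ x ∈ I, ∀ y ∈ I, ∀ z, x ≤ z → z ≤ y → z ∈ I

open Classical in
/-- The interval-closed set toggle `t_p`. -/
noncomputable def icToggle {α : Type*} [PartialOrder α] (p : α) (I : Set α) : Set α :=
  if IsIntervalClosed (symmDiff I {p}) then symmDiff I {p} else I

section Aux

variable {α : Type*} [PartialOrder α]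

lemma ic_empty : IsIntervalClosed (∅ : Set α) :=
  fun x hx => absurd hx (Set.notMem_empty x)

lemma ic_singleton (a : α) : IsIntervalClosed ({a} : Set α) := by
  intro x hx y hy z h1 h2
  rw [Set.mem_singleton_iff] at hx hy ⊢
  subst hx; subst hy
  exact le_antisymm h2 h1

lemma sd_not_mem {I : Set α} {p : α} (h : p ∉ I) : symmDiff I {p} = insert p I := by
  ext x
  simp only [Set.mem_symmDiff, Set.mem_singleton_iff, Set.mem_insert_iff]
  constructor
  · rintro (⟨hx, -⟩ | ⟨rfl, -⟩)
    · exact Or.inr hx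
    · exact Or.inl rfl
  · rintro (rfl | hx)
    · exact Or.inr ⟨rfl, h⟩
    · exact Or.inl ⟨hx, fun hxp => h (hxp ▸ hx)⟩

lemma sd_mem {I : Set α} {p : α} (h : p ∈ I) : symmDiff I {p} = I \ {p} := by
  ext x
  simp only [Set.mem_symmDiff, Set.mem_singleton_iff, Set.mem_diff]
  constructor
  · rintro (⟨hx, hxp⟩ | ⟨rfl, hx⟩)
    · exact ⟨hx, hxp⟩
    · exact absurd h hx
  · rintro ⟨hx, hxp⟩
    exact Or.inl ⟨hx, hxp⟩

lemma toggle_pos {I : Set α} {p : α} (h : IsIntervalClosed (symmDiff I {p})) :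
    icToggle p I = symmDiff I {p} := by
  unfold icToggle; exact if_pos h

lemma toggle_neg {I : Set α} {p : α} (h : ¬ IsIntervalClosed (symmDiff I {p})) :
    icToggle p I = I := by
  unfold icToggle; exact if_neg h

lemma toggle_insert {I : Set α} {p : α} (hpI : p ∉ I)
    (h : IsIntervalClosed (insert p I)) : icToggle p I = insert p I := by
  rw [toggle_pos (by rw [sd_not_mem hpI]; exact h), sd_not_mem hpI]

lemma toggle_insert_not {I : Set α} {p : α} (hpI : p ∉ I)
    (h : ¬ IsIntervalClosed (insert p I)) : icToggle p I = I :=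
  toggle_neg (by rw [sd_not_mem hpI]; exact h)

lemma toggle_diff {I : Set α} {p : α} (hpI : p ∈ I)
    (h : IsIntervalClosed (I \ {p})) : icToggle p I = I \ {p} := by
  rw [toggle_pos (by rw [sd_mem hpI]; exact h), sd_mem hpI]

lemma toggle_diff_not {I : Set α} {p : α} (hpI : p ∈ I)
    (h : ¬ IsIntervalClosed (I \ {p})) : icToggle p I = I :=
  toggle_neg (by rw [sd_mem hpI]; exact h)

lemma cover_mem {p q z : α} (hc : p ⋖ q) (h1 : p ≤ z) (h2 : z ≤ q) : z = p ∨ z = q := by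
  by_contra h
  push_neg at h
  exact hc.2 (h1.lt_of_ne (Ne.symm h.1)) (h2.lt_of_ne h.2)

lemma remove_min {p : α} (hp : IsMin p) {I : Set α} (hI : IsIntervalClosed I) :
    IsIntervalClosed (I \ {p}) := by
  intro x hx y hy z h1 h2
  refine ⟨hI x hx.1 y hy.1 z h1 h2, fun hz => ?_⟩
  rw [Set.mem_singleton_iff] at hz
  subst hz
  exact hx.2 (Set.mem_singleton_iff.2 (le_antisymm h1 (hp h1)))

lemma remove_max {q : α} (hq : IsMax q) {I : Set α} (hI : IsIntervalClosed I) :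
    IsIntervalClosed (I \ {q}) := by
  intro x hx y hy z h1 h2
  refine ⟨hI x hx.1 y hy.1 z h1 h2, fun hz => ?_⟩
  rw [Set.mem_singleton_iff] at hz
  subst hz
  exact hy.2 (Set.mem_singleton_iff.2 (le_antisymm (hq h2) h2))

lemma insert_min_ic_iff {p : α} (hp : IsMin p) {I : Set α} (hI : IsIntervalClosed I) :
    IsIntervalClosed (insert p I) ↔ ∀ y ∈ I, ∀ z, p ≤ z → z ≤ y → z ∈ insert p I := by
  constructor
  · intro h y hy z h1 h2
    exact h p (Set.mem_insert _ _) y (Set.mem_insert_of_mem _ hy) z h1 h2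
  · intro h x hx y hy z h1 h2
    rcases Set.mem_insert_iff.1 hy with hyp | hy'
    · have hzp : z ≤ p := hyp ▸ h2
      exact Set.mem_insert_iff.2 (Or.inl (le_antisymm hzp (hp hzp)))
    · rcases Set.mem_insert_iff.1 hx with hxp | hx'
      · exact h y hy' z (hxp ▸ h1) h2
      · exact Set.mem_insert_of_mem _ (hI x hx' y hy' z h1 h2)

lemma insert_max_ic_iff {q : α} (hq : IsMax q) {I : Set α} (hI : IsIntervalClosed I) :
    IsIntervalClosed (insert q I) ↔ ∀ x ∈ I, ∀ z, x ≤ z → z ≤ q → z ∈ insert q I := by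
  constructor
  · intro h x hx z h1 h2
    exact h x (Set.mem_insert_of_mem _ hx) q (Set.mem_insert _ _) z h1 h2
  · intro h x hx y hy z h1 h2
    rcases Set.mem_insert_iff.1 hx with hxq | hx'
    · have hqz : q ≤ z := hxq ▸ h1
      exact Set.mem_insert_iff.2 (Or.inl (le_antisymm (hq hqz) hqz))
    · rcases Set.mem_insert_iff.1 hy with hyq | hy'
      · exact h x hx' z h1 (hyq ▸ h2)
      · exact Set.mem_insert_of_mem _ (hI x hx' y hy' z h1 h2)

end Aux
section Incomp

variable {α : Type*} [PartialOrder α]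

lemma K_lemma {p q : α} (hpq : ¬ p ≤ q) (hqp : ¬ q ≤ p)
    {I : Set α} (hI : IsIntervalClosed I)
    (hp : IsIntervalClosed (symmDiff I {p}))
    (hq : IsIntervalClosed (symmDiff I {q})) :
    IsIntervalClosed (symmDiff (symmDiff I {p}) {q}) := by
  have hne : p ≠ q := fun h => hpq (h ▸ le_refl p)
  have hT : symmDiff (symmDiff I {p}) {q} = symmDiff I {p, q} := by
    rw [symmDiff_assoc]
    congr 1
    ext x
    simp only [Set.mem_symmDiff, Set.mem_singleton_iff, Set.mem_insert_iff]
    constructor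
    · rintro (⟨rfl, -⟩ | ⟨rfl, -⟩)
      · exact Or.inl rfl
      · exact Or.inr rfl
    · rintro (rfl | rfl)
      · exact Or.inl ⟨rfl, hne⟩
      · exact Or.inr ⟨rfl, fun h => hne h.symm⟩
  rw [hT]
  intro x hx y hy z hxz hzy
  rw [Set.mem_symmDiff] at hx hy ⊢
  simp only [Set.mem_insert_iff, Set.mem_singleton_iff] at hx hy ⊢
  by_cases hzp : z = p
  · refine Or.inr ⟨Or.inl hzp, ?_⟩
    rcases hx with ⟨hxI, hxne⟩ | ⟨hxpq, hxI⟩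
    · push_neg at hxne
      rcases hy with ⟨hyI, hyne⟩ | ⟨hypq, hyI⟩
      · push_neg at hyne
        have hxA : x ∈ symmDiff I {p} :=
          Set.mem_symmDiff.2 (Or.inl ⟨hxI, by simp [hxne.1]⟩)
        have hyA : y ∈ symmDiff I {p} :=
          Set.mem_symmDiff.2 (Or.inl ⟨hyI, by simp [hyne.1]⟩)
        have hz := hp x hxA y hyA z hxz hzy
        rw [Set.mem_symmDiff, Set.mem_singleton_iff] at hz
        rcases hz with ⟨-, h2⟩ | ⟨-, h2⟩
        · exact absurd hzp h2
        · exact h2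
      · rcases hypq with hyp | hyq
        · intro h
          rw [hzp] at h
          apply hyI
          rw [hyp]
          exact h
        · rw [hzp] at hzy
          rw [hyq] at hzy
          exact absurd hzy hpq
    · rcases hxpq with hxp | hxq
      · intro h
        rw [hzp] at h
        apply hxI
        rw [hxp]
        exact h
      · rw [hzp] at hxz
        rw [hxq] at hxz
        exact absurd hxz hqp
  · by_cases hzq : z = q
    · refine Or.inr ⟨Or.inr hzq, ?_⟩
      rcases hx with ⟨hxI, hxne⟩ | ⟨hxpq, hxI⟩
      · push_neg at hxne
        rcases hy with ⟨hyI, hyne⟩ | ⟨hypq, hyI⟩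
        · push_neg at hyne
          have hxB : x ∈ symmDiff I {q} :=
            Set.mem_symmDiff.2 (Or.inl ⟨hxI, by simp [hxne.2]⟩)
          have hyB : y ∈ symmDiff I {q} :=
            Set.mem_symmDiff.2 (Or.inl ⟨hyI, by simp [hyne.2]⟩)
          have hz := hq x hxB y hyB z hxz hzy
          rw [Set.mem_symmDiff, Set.mem_singleton_iff] at hz
          rcases hz with ⟨-, h2⟩ | ⟨-, h2⟩
          · exact absurd hzq h2
          · exact h2
        · rcases hypq with hyp | hyq
          · rw [hzq] at hzy
            rw [hyp] at hzy
            exact absurd hzy hqp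
          · intro h
            rw [hzq] at h
            apply hyI
            rw [hyq]
            exact h
      · rcases hxpq with hxp | hxq
        · rw [hzq] at hxz
          rw [hxp] at hxz
          exact absurd hxz hpq
        · intro h
          rw [hzq] at h
          apply hxI
          rw [hxq]
          exact h
    · refine Or.inl ⟨?_, by tauto⟩
      rcases hx with ⟨hxI, hxne⟩ | ⟨hxpq, hxI⟩
      · push_neg at hxne
        rcases hy with ⟨hyI, hyne⟩ | ⟨hypq, hyI⟩
        · exact hI x hxI y hyI z hxz hzy
        · rcases hypq with hyp | hyq
          · have hxA : x ∈ symmDiff I {p} :=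
              Set.mem_symmDiff.2 (Or.inl ⟨hxI, by simp [hxne.1]⟩)
            have hyA : y ∈ symmDiff I {p} :=
              Set.mem_symmDiff.2 (Or.inr ⟨by simp [hyp], hyp ▸ hyI⟩)
            have hz := hp x hxA y hyA z hxz hzy
            rw [Set.mem_symmDiff, Set.mem_singleton_iff] at hz
            rcases hz with ⟨h1, -⟩ | ⟨h1, -⟩
            · exact h1
            · exact absurd h1 hzp
          · have hxB : x ∈ symmDiff I {q} :=
              Set.mem_symmDiff.2 (Or.inl ⟨hxI, by simp [hxne.2]⟩)
            have hyB : y ∈ symmDiff I {q} :=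
              Set.mem_symmDiff.2 (Or.inr ⟨by simp [hyq], hyq ▸ hyI⟩)
            have hz := hq x hxB y hyB z hxz hzy
            rw [Set.mem_symmDiff, Set.mem_singleton_iff] at hz
            rcases hz with ⟨h1, -⟩ | ⟨h1, -⟩
            · exact h1
            · exact absurd h1 hzq
      · rcases hxpq with hxp | hxq
        · rcases hy with ⟨hyI, hyne⟩ | ⟨hypq, hyI⟩
          · push_neg at hyne
            have hxA : x ∈ symmDiff I {p} :=
              Set.mem_symmDiff.2 (Or.inr ⟨by simp [hxp], hxp ▸ hxI⟩)
            have hyA : y ∈ symmDiff I {p} :=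
              Set.mem_symmDiff.2 (Or.inl ⟨hyI, by simp [hyne.1]⟩)
            have hz := hp x hxA y hyA z hxz hzy
            rw [Set.mem_symmDiff, Set.mem_singleton_iff] at hz
            rcases hz with ⟨h1, -⟩ | ⟨h1, -⟩
            · exact h1
            · exact absurd h1 hzp
          · rcases hypq with hyp | hyq
            · exact absurd (le_antisymm (hyp ▸ hzy) (hxp ▸ hxz)) hzp
            · exact absurd ((hxp ▸ hxz).trans (hyq ▸ hzy)) hpq
        · rcases hy with ⟨hyI, hyne⟩ | ⟨hypq, hyI⟩
          · push_neg at hyne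
            have hxB : x ∈ symmDiff I {q} :=
              Set.mem_symmDiff.2 (Or.inr ⟨by simp [hxq], hxq ▸ hxI⟩)
            have hyB : y ∈ symmDiff I {q} :=
              Set.mem_symmDiff.2 (Or.inl ⟨hyI, by simp [hyne.2]⟩)
            have hz := hq x hxB y hyB z hxz hzy
            rw [Set.mem_symmDiff, Set.mem_singleton_iff] at hz
            rcases hz with ⟨h1, -⟩ | ⟨h1, -⟩
            · exact h1
            · exact absurd h1 hzq
          · rcases hypq with hyp | hyq
            · exact absurd ((hxq ▸ hxz).trans (hyp ▸ hzy)) hqp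
            · exact absurd (le_antisymm (hyq ▸ hzy) (hxq ▸ hxz)) hzq

end Incomp
section Commute

variable {α : Type*} [PartialOrder α]

lemma commute_incomp {p q : α} (h1 : ¬ p ≤ q) (h2 : ¬ q ≤ p)
    (I : Set α) (hI : IsIntervalClosed I) :
    icToggle p (icToggle q I) = icToggle q (icToggle p I) := by
  have hcanp : symmDiff (symmDiff I {p}) {p} = I := symmDiff_symmDiff_cancel_right {p} I
  have hcanq : symmDiff (symmDiff I {q}) {q} = I := symmDiff_symmDiff_cancel_right {q} I
  by_cases hp : IsIntervalClosed (symmDiff I {p}) <;>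
    by_cases hq : IsIntervalClosed (symmDiff I {q})
  · have h3 : IsIntervalClosed (symmDiff (symmDiff I {q}) {p}) := K_lemma h2 h1 hI hq hp
    have h4 : IsIntervalClosed (symmDiff (symmDiff I {p}) {q}) := K_lemma h1 h2 hI hp hq
    rw [toggle_pos hq, toggle_pos hp, toggle_pos h3, toggle_pos h4,
      symmDiff_assoc, symmDiff_assoc, symmDiff_comm ({p} : Set α) {q}]
  · have key : ¬ IsIntervalClosed (symmDiff (symmDiff I {p}) {q}) := by
      intro h
      apply hq
      have h5 := K_lemma h1 h2 hp (by rw [hcanp]; exact hI) h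
      rw [hcanp] at h5
      exact h5
    rw [toggle_neg hq, toggle_pos hp, toggle_neg key]
  · have key : ¬ IsIntervalClosed (symmDiff (symmDiff I {q}) {p}) := by
      intro h
      apply hp
      have h5 := K_lemma h2 h1 hq (by rw [hcanq]; exact hI) h
      rw [hcanq] at h5
      exact h5
    rw [toggle_pos hq, toggle_neg hp, toggle_neg key, toggle_pos hq]
  · rw [toggle_neg hq, toggle_neg hp, toggle_neg hq]

lemma commute_cover {p q : α} (hc : p ⋖ q) (hp : IsMin p) (hq : IsMax q)
    (I : Set α) (hI : IsIntervalClosed I) :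
    icToggle p (icToggle q I) = icToggle q (icToggle p I) := by
  have hne : p ≠ q := hc.1.ne
  by_cases hpI : p ∈ I <;> by_cases hqI : q ∈ I
  · -- both in I
    have e1 : icToggle p I = I \ {p} := toggle_diff hpI (remove_min hp hI)
    have e2 : icToggle q I = I \ {q} := toggle_diff hqI (remove_max hq hI)
    have m1 : p ∈ I \ {q} := ⟨hpI, by simp [hne]⟩
    have m2 : q ∈ I \ {p} := ⟨hqI, by simp [Ne.symm hne]⟩
    rw [e1, e2, toggle_diff m1 (remove_min hp (remove_max hq hI)),
      toggle_diff m2 (remove_max hq (remove_min hp hI)), Set.diff_diff_comm]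
  · -- p ∈ I, q ∉ I
    have hIp : IsIntervalClosed (I \ {p}) := remove_min hp hI
    have e1 : icToggle p I = I \ {p} := toggle_diff hpI hIp
    have hq1 : q ∉ I \ {p} := fun h => hqI h.1
    have key : IsIntervalClosed (insert q I) ↔ IsIntervalClosed (insert q (I \ {p})) := by
      rw [insert_max_ic_iff hq hI, insert_max_ic_iff hq hIp]
      constructor
      · intro h x hx z hz1 hz2
        rcases Set.mem_insert_iff.1 (h x hx.1 z hz1 hz2) with hzq | hz
        · exact Set.mem_insert_iff.2 (Or.inl hzq)
        · refine Set.mem_insert_of_mem _ ⟨hz, fun hzp => ?_⟩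
          rw [Set.mem_singleton_iff] at hzp
          rw [hzp] at hz1
          exact hx.2 (Set.mem_singleton_iff.2 (le_antisymm hz1 (hp hz1)))
      · intro h x hx z hz1 hz2
        by_cases hxp : x = p
        · rcases cover_mem hc (hxp ▸ hz1) hz2 with hzp | hzq
          · exact Set.mem_insert_of_mem _ (hzp ▸ hpI)
          · exact Set.mem_insert_iff.2 (Or.inl hzq)
        · rcases Set.mem_insert_iff.1 (h x ⟨hx, by simp [hxp]⟩ z hz1 hz2) with hzq | hz
          · exact Set.mem_insert_iff.2 (Or.inl hzq)
          · exact Set.mem_insert_of_mem _ hz.1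
    by_cases hICq : IsIntervalClosed (insert q I)
    · have e2 : icToggle q I = insert q I := toggle_insert hqI hICq
      have e3 : icToggle q (I \ {p}) = insert q (I \ {p}) := toggle_insert hq1 (key.1 hICq)
      have e4 : icToggle p (insert q I) = insert q I \ {p} :=
        toggle_diff (Set.mem_insert_of_mem _ hpI) (remove_min hp hICq)
      rw [e2, e4, e1, e3]
      exact (Set.insert_diff_singleton_comm (fun h => hne h.symm) I).symm
    · have e2 : icToggle q I = I := toggle_insert_not hqI hICq
      have e3 : icToggle q (I \ {p}) = I \ {p} :=
        toggle_insert_not hq1 (fun h => hICq (key.2 h))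
      rw [e2, e1, e3]
  · -- p ∉ I, q ∈ I
    have hIq : IsIntervalClosed (I \ {q}) := remove_max hq hI
    have e1 : icToggle q I = I \ {q} := toggle_diff hqI hIq
    have hp1 : p ∉ I \ {q} := fun h => hpI h.1
    have key : IsIntervalClosed (insert p I) ↔ IsIntervalClosed (insert p (I \ {q})) := by
      rw [insert_min_ic_iff hp hI, insert_min_ic_iff hp hIq]
      constructor
      · intro h y hy z hz1 hz2
        rcases Set.mem_insert_iff.1 (h y hy.1 z hz1 hz2) with hzp | hz
        · exact Set.mem_insert_iff.2 (Or.inl hzp)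
        · refine Set.mem_insert_of_mem _ ⟨hz, fun hzq => ?_⟩
          rw [Set.mem_singleton_iff] at hzq
          rw [hzq] at hz2
          exact hy.2 (Set.mem_singleton_iff.2 (le_antisymm (hq hz2) hz2))
      · intro h y hy z hz1 hz2
        by_cases hyq : y = q
        · rcases cover_mem hc hz1 (hyq ▸ hz2) with hzp | hzq
          · exact Set.mem_insert_iff.2 (Or.inl hzp)
          · exact Set.mem_insert_of_mem _ (hzq ▸ hqI)
        · rcases Set.mem_insert_iff.1 (h y ⟨hy, by simp [hyq]⟩ z hz1 hz2) with hzp | hz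
          · exact Set.mem_insert_iff.2 (Or.inl hzp)
          · exact Set.mem_insert_of_mem _ hz.1
    by_cases hICp : IsIntervalClosed (insert p I)
    · have e2 : icToggle p I = insert p I := toggle_insert hpI hICp
      have e3 : icToggle p (I \ {q}) = insert p (I \ {q}) := toggle_insert hp1 (key.1 hICp)
      have e4 : icToggle q (insert p I) = insert p I \ {q} :=
        toggle_diff (Set.mem_insert_of_mem _ hqI) (remove_max hq hICp)
      rw [e1, e3, e2, e4]
      exact Set.insert_diff_singleton_comm hne I
    · have e2 : icToggle p I = I := toggle_insert_not hpI hICp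
      have e3 : icToggle p (I \ {q}) = I \ {q} :=
        toggle_insert_not hp1 (fun h => hICp (key.2 h))
      rw [e1, e3, e2, e1]
  · -- p ∉ I, q ∉ I
    have hqp1 : q ∉ insert p I := fun h => (Set.mem_insert_iff.1 h).elim (fun e => hne e.symm) hqI
    have hpq1 : p ∉ insert q I := fun h => (Set.mem_insert_iff.1 h).elim hne hpI
    by_cases hICp : IsIntervalClosed (insert p I) <;>
      by_cases hICq : IsIntervalClosed (insert q I)
    · have hCp := (insert_min_ic_iff hp hI).1 hICp
      have hCq := (insert_max_ic_iff hq hI).1 hICq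
      have h5 : IsIntervalClosed (insert p (insert q I)) := by
        rw [insert_min_ic_iff hp hICq]
        intro y hy z hz1 hz2
        rcases Set.mem_insert_iff.1 hy with hyq | hy'
        · rcases cover_mem hc hz1 (hyq ▸ hz2) with hzp | hzq
          · exact Set.mem_insert_iff.2 (Or.inl hzp)
          · exact Set.mem_insert_of_mem _ (Set.mem_insert_iff.2 (Or.inl hzq))
        · rcases Set.mem_insert_iff.1 (hCp y hy' z hz1 hz2) with hzp | hz
          · exact Set.mem_insert_iff.2 (Or.inl hzp)
          · exact Set.mem_insert_of_mem _ (Set.mem_insert_of_mem _ hz)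
      have h6 : IsIntervalClosed (insert q (insert p I)) := by
        rw [insert_max_ic_iff hq hICp]
        intro x hx z hz1 hz2
        rcases Set.mem_insert_iff.1 hx with hxp | hx'
        · rcases cover_mem hc (hxp ▸ hz1) hz2 with hzp | hzq
          · exact Set.mem_insert_of_mem _ (Set.mem_insert_iff.2 (Or.inl hzp))
          · exact Set.mem_insert_iff.2 (Or.inl hzq)
        · rcases Set.mem_insert_iff.1 (hCq x hx' z hz1 hz2) with hzq | hz
          · exact Set.mem_insert_iff.2 (Or.inl hzq)
          · exact Set.mem_insert_of_mem _ (Set.mem_insert_of_mem _ hz)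
      rw [toggle_insert hqI hICq, toggle_insert hpI hICp,
        toggle_insert hpq1 h5, toggle_insert hqp1 h6]
      exact Set.insert_comm p q I
    · have key : ¬ IsIntervalClosed (insert q (insert p I)) := by
        intro h
        apply hICq
        rw [insert_max_ic_iff hq hI]
        have h7 := (insert_max_ic_iff hq hICp).1 h
        intro x hx z hz1 hz2
        rcases Set.mem_insert_iff.1 (h7 x (Set.mem_insert_of_mem _ hx) z hz1 hz2) with hzq | hz
        · exact Set.mem_insert_iff.2 (Or.inl hzq)
        · rcases Set.mem_insert_iff.1 hz with hzp | hz'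
          · rw [hzp] at hz1
            exact absurd ((le_antisymm hz1 (hp hz1)) ▸ hx) hpI
          · exact Set.mem_insert_of_mem _ hz'
      rw [toggle_insert_not hqI hICq, toggle_insert hpI hICp, toggle_insert_not hqp1 key]
    · have key : ¬ IsIntervalClosed (insert p (insert q I)) := by
        intro h
        apply hICp
        rw [insert_min_ic_iff hp hI]
        have h7 := (insert_min_ic_iff hp hICq).1 h
        intro y hy z hz1 hz2
        rcases Set.mem_insert_iff.1 (h7 y (Set.mem_insert_of_mem _ hy) z hz1 hz2) with hzp | hz
        · exact Set.mem_insert_iff.2 (Or.inl hzp)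
        · rcases Set.mem_insert_iff.1 hz with hzq | hz'
          · rw [hzq] at hz2
            exact absurd ((le_antisymm (hq hz2) hz2) ▸ hy) hqI
          · exact Set.mem_insert_of_mem _ hz'
      rw [toggle_insert hqI hICq, toggle_insert_not hpq1 key, toggle_insert_not hpI hICp,
        toggle_insert hqI hICq]
    · rw [toggle_insert_not hqI hICq, toggle_insert_not hpI hICp, toggle_insert_not hqI hICq]

end Commute
section Forward

variable {α : Type*} [PartialOrder α]

lemma fwd {p q : α}
    (hcomm : ∀ I : Set α, IsIntervalClosed I →
      icToggle p (icToggle q I) = icToggle q (icToggle p I))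
    (hlt : p < q) : p ⋖ q ∧ IsMin p ∧ IsMax q := by
  have hne : p ≠ q := hlt.ne
  -- Step 1: covering
  have hcov : p ⋖ q := by
    refine ⟨hlt, fun r hpr hrq => ?_⟩
    have hq0 : icToggle q (∅ : Set α) = {q} := by
      have hins : insert q (∅ : Set α) = {q} := by simp
      rw [toggle_insert (Set.notMem_empty q) (by rw [hins]; exact ic_singleton q), hins]
    have hp0 : icToggle p (∅ : Set α) = {p} := by
      have hins : insert p (∅ : Set α) = {p} := by simp
      rw [toggle_insert (Set.notMem_empty p) (by rw [hins]; exact ic_singleton p), hins]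
    have hpq2 : icToggle p ({q} : Set α) = {q} := by
      refine toggle_insert_not (fun h => hne (Set.mem_singleton_iff.1 h)) (fun h => ?_)
      have hr := h p (Set.mem_insert _ _) q (Set.mem_insert_of_mem _ rfl) r hpr.le hrq.le
      rcases Set.mem_insert_iff.1 hr with hrp | hrq'
      · exact absurd hrp hpr.ne'
      · exact absurd (Set.mem_singleton_iff.1 hrq') hrq.ne
    have hqp2 : icToggle q ({p} : Set α) = {p} := by
      refine toggle_insert_not (fun h => hne (Set.mem_singleton_iff.1 h).symm) (fun h => ?_)
      have hr := h p (Set.mem_insert_of_mem _ rfl) q (Set.mem_insert _ _) r hpr.le hrq.le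
      rcases Set.mem_insert_iff.1 hr with hrq' | hrp
      · exact absurd hrq' hrq.ne
      · exact absurd (Set.mem_singleton_iff.1 hrp) hpr.ne'
    have heq := hcomm ∅ ic_empty
    rw [hq0, hp0, hpq2, hqp2] at heq
    exact hne (Set.singleton_eq_singleton_iff.1 heq).symm
  refine ⟨hcov, ?_, ?_⟩
  -- Step 2: p is minimal
  · by_contra hmin
    rcases not_isMin_iff.1 hmin with ⟨a, ha⟩
    have haq : a ≤ q := ha.le.trans hlt.le
    have hanep : a ≠ p := ha.ne
    have haneq : a ≠ q := (ha.trans hlt).ne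
    set K : Set α := {z | a ≤ z ∧ z ≤ q ∧ z ≠ q} with hK
    have haK : a ∈ K := ⟨le_refl a, haq, haneq⟩
    have hpK : p ∈ K := ⟨ha.le, hlt.le, hne⟩
    have hqK : q ∉ K := fun h => h.2.2 rfl
    have hKIC : IsIntervalClosed K := by
      intro x hx y hy z h1 h2
      exact ⟨hx.1.trans h1, h2.trans hy.2.1,
        fun hzq => hy.2.2 (le_antisymm hy.2.1 (hzq ▸ h2))⟩
    have hinsIC : IsIntervalClosed (insert q K) := by
      intro x hx y hy z h1 h2
      have hax : a ≤ x := by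
        rcases Set.mem_insert_iff.1 hx with hxq | hx'
        · exact hxq ▸ haq
        · exact hx'.1
      have hzq' : z ≤ q := by
        rcases Set.mem_insert_iff.1 hy with hyq | hy'
        · exact hyq ▸ h2
        · exact h2.trans hy'.2.1
      by_cases hzq : z = q
      · exact Set.mem_insert_iff.2 (Or.inl hzq)
      · exact Set.mem_insert_of_mem _ ⟨hax.trans h1, hzq', hzq⟩
    have e1 : icToggle q K = insert q K := toggle_insert hqK hinsIC
    have e2 : icToggle p (insert q K) = insert q K := by
      refine toggle_diff_not (Set.mem_insert_of_mem _ hpK) (fun h => ?_)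
      have hr := h a ⟨Set.mem_insert_of_mem _ haK, by simp [hanep]⟩
        q ⟨Set.mem_insert _ _, by simp [Ne.symm hne]⟩ p ha.le hlt.le
      exact hr.2 rfl
    have hKpIC : IsIntervalClosed (K \ {p}) := by
      intro x hx y hy z h1 h2
      refine ⟨hKIC x hx.1 y hy.1 z h1 h2, fun hzp => ?_⟩
      rw [Set.mem_singleton_iff] at hzp
      rw [hzp] at h2
      have h3 : p < y := lt_of_le_of_ne h2 (fun h => hy.2 (Set.mem_singleton_iff.2 h.symm))
      exact hcov.2 h3 (lt_of_le_of_ne hy.1.2.1 hy.1.2.2)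
    have e3 : icToggle p K = K \ {p} := toggle_diff hpK hKpIC
    have e4 : icToggle q (K \ {p}) = K \ {p} := by
      refine toggle_insert_not (fun h => hqK h.1) (fun h => ?_)
      have hr := h a (Set.mem_insert_of_mem _ ⟨haK, by simp [hanep]⟩)
        q (Set.mem_insert _ _) p ha.le hlt.le
      rcases Set.mem_insert_iff.1 hr with hpq' | hp'
      · exact hne hpq'
      · exact hp'.2 rfl
    have heq := hcomm K hKIC
    rw [e1, e2, e3, e4] at heq
    have : q ∈ K \ {p} := heq ▸ Set.mem_insert q K
    exact hqK this.1
  -- Step 3: q is maximal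
  · by_contra hmax
    rcases not_isMax_iff.1 hmax with ⟨b, hb⟩
    have hpb : p ≤ b := hlt.le.trans hb.le
    have hbneq : b ≠ q := hb.ne'
    have hbnep : b ≠ p := (hlt.trans hb).ne'
    set K : Set α := {z | p ≤ z ∧ z ≤ b ∧ z ≠ p} with hK
    have hbK : b ∈ K := ⟨hpb, le_refl b, hbnep⟩
    have hqK : q ∈ K := ⟨hlt.le, hb.le, hne.symm⟩
    have hpK : p ∉ K := fun h => h.2.2 rfl
    have hKIC : IsIntervalClosed K := by
      intro x hx y hy z h1 h2
      exact ⟨hx.1.trans h1, h2.trans hy.2.1,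
        fun hzp => hx.2.2 (le_antisymm (hzp ▸ h1) hx.1)⟩
    have hinsIC : IsIntervalClosed (insert p K) := by
      intro x hx y hy z h1 h2
      have hpz : p ≤ z := by
        rcases Set.mem_insert_iff.1 hx with hxp | hx'
        · exact hxp ▸ h1
        · exact hx'.1.trans h1
      by_cases hzp : z = p
      · exact Set.mem_insert_iff.2 (Or.inl hzp)
      · have hzb : z ≤ b := by
          rcases Set.mem_insert_iff.1 hy with hyp | hy'
          · exact absurd (le_antisymm (hyp ▸ h2) hpz) hzp
          · exact h2.trans hy'.2.1
        exact Set.mem_insert_of_mem _ ⟨hpz, hzb, hzp⟩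
    have e1 : icToggle p K = insert p K := toggle_insert hpK hinsIC
    have e2 : icToggle q (insert p K) = insert p K := by
      refine toggle_diff_not (Set.mem_insert_of_mem _ hqK) (fun h => ?_)
      have hr := h p ⟨Set.mem_insert _ _, by simp [hne]⟩
        b ⟨Set.mem_insert_of_mem _ hbK, by simp [hbneq]⟩ q hlt.le hb.le
      exact hr.2 rfl
    have hKqIC : IsIntervalClosed (K \ {q}) := by
      intro x hx y hy z h1 h2
      refine ⟨hKIC x hx.1 y hy.1 z h1 h2, fun hzq => ?_⟩
      rw [Set.mem_singleton_iff] at hzq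
      rw [hzq] at h1
      have h3 : x < q := lt_of_le_of_ne h1 (fun h => hx.2 (Set.mem_singleton_iff.2 h))
      exact hcov.2 (lt_of_le_of_ne hx.1.1 (fun h => hx.1.2.2 h.symm)) h3
    have e3 : icToggle q K = K \ {q} := toggle_diff hqK hKqIC
    have e4 : icToggle p (K \ {q}) = K \ {q} := by
      refine toggle_insert_not (fun h => hpK h.1) (fun h => ?_)
      have hr := h p (Set.mem_insert _ _)
        b (Set.mem_insert_of_mem _ ⟨hbK, by simp [hbneq]⟩) q hlt.le hb.le
      rcases Set.mem_insert_iff.1 hr with hqp' | hq'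
      · exact hne hqp'.symm
      · exact hq'.2 rfl
    have heq := hcomm K hKIC
    rw [e3, e4, e1, e2] at heq
    have : p ∈ K \ {q} := heq.symm ▸ Set.mem_insert p K
    exact hpK this.1

end Forward

/-- in the interval-closed set toggle group of a finite poset `P`, for
distinct `p, q`, the toggles `t_p` and `t_q` commute if and only if `p` and `q` are
incomparable, or (up to swapping) `q` covers `p` with `p` minimal and `q` maximal. -/
theorem icToggle_commute_iff {α : Type*} [Fintype α] [PartialOrder α]
    (p q : α) (hpq : p ≠ q) :
    (∀ I : Set α, IsIntervalClosed I →
        icToggle p (icToggle q I) = icToggle q (icToggle p I))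
      ↔ ((¬ p ≤ q ∧ ¬ q ≤ p) ∨
          (p ⋖ q ∧ IsMin p ∧ IsMax q) ∨
          (q ⋖ p ∧ IsMin q ∧ IsMax p)) := by
  constructor
  · intro hcomm
    by_cases h1 : p ≤ q
    · exact Or.inr (Or.inl (fwd hcomm (h1.lt_of_ne hpq)))
    · by_cases h2 : q ≤ p
      · exact Or.inr (Or.inr (fwd (fun I hI => (hcomm I hI).symm) (h2.lt_of_ne (Ne.symm hpq))))
      · exact Or.inl ⟨h1, h2⟩
  · rintro (⟨h1, h2⟩ | ⟨hc, hm, hM⟩ | ⟨hc, hm, hM⟩)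
    · exact fun I hI => commute_incomp h1 h2 I hI
    · exact fun I hI => commute_cover hc hm hM I hI
    · exact fun I hI => (commute_cover hc hm hM I hI).symm
end

section
/- The set of interval-closed sets of a finite poset P is a convex geometry: (1) ∅ and P are interval-closed; (2) the intersection of two interval-closed sets is interval-closed; and (3) for every interval-closed set I ≠ P there exists x ∈ P \ I such that I ∪ {x} is interval-closed. -/
theorem isIntervalClosed_iff_ordConnected {α : Type*} [PartialOrder α] {I : Set α} :
    IsIntervalClosed I ↔ I.OrdConnected :=
  ⟨fun h => ⟨fun _ hx _ hy z hz => h _ hx _ hy z hz.1 hz.2⟩,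
    fun h _ hx _ hy _ h₁ h₂ => h.out hx hy ⟨h₁, h₂⟩⟩

section
variable {α : Type*} [PartialOrder α] {I : Set α} {x : α}

theorem IsLowerSet.insert_of_minimal_notMem (hI : IsLowerSet I) (hx : Minimal (· ∉ I) x) :
    IsLowerSet (insert x I) := by
  rintro a b hba (rfl | ha)
  · by_cases hb : b ∈ I
    · exact Or.inr hb
    · exact Or.inl (hx.eq_of_ge hb hba).symm
  · exact Or.inr (hI hba ha)

theorem Set.OrdConnected.insert_of_maximal_mem_lowerClosure_diff (hI : I.OrdConnected)
    (hx : Maximal (· ∈ (lowerClosure I : Set α) \ I) x) : (insert x I).OrdConnected := by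
  rw [ordConnected_def]
  rintro a (rfl | ha) b (rfl | hb) z ⟨haz, hzb⟩
  · exact Or.inl (le_antisymm hzb haz)
  · by_cases hz : z ∈ I
    · exact Or.inr hz
    · exact Or.inl (hx.eq_of_le ⟨⟨b, hb, hzb⟩, hz⟩ haz).symm
  · obtain ⟨y, hy, hby⟩ := hx.prop.1
    exact Or.inr (hI.out ha hy ⟨haz, hzb.trans hby⟩)
  · exact Or.inr (hI.out ha hb ⟨haz, hzb⟩)

theorem Set.OrdConnected.exists_notMem_ordConnected_insert [Finite α] (hI : I.OrdConnected)
    (hne : I ≠ univ) : ∃ x ∉ I, (insert x I).OrdConnected := by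
  by_cases hbelow : ((lowerClosure I : Set α) \ I).Nonempty
  · obtain ⟨x, hx⟩ := (toFinite _).exists_maximal hbelow
    exact ⟨x, hx.prop.2, hI.insert_of_maximal_mem_lowerClosure_diff hx⟩
  · have hlower : IsLowerSet I := by
      rw [← lowerClosure_eq]
      exact subset_antisymm (sdiff_eq_empty.1 (not_nonempty_iff_eq_empty.1 hbelow))
        subset_lowerClosure
    obtain ⟨x, hx⟩ := (toFinite Iᶜ).exists_minimal (nonempty_compl.2 hne)
    exact ⟨x, hx.prop, (hlower.insert_of_minimal_notMem hx).ordConnected⟩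

end

/-- the interval-closed sets of a finite poset form a convex geometry:
`∅` and the whole poset are interval-closed, the family is closed under intersection,
and every interval-closed set other than the whole poset can be augmented by a single
element to another interval-closed set. -/
theorem intervalClosed_convexGeometry {α : Type*} [Fintype α] [PartialOrder α] :
    IsIntervalClosed (∅ : Set α) ∧
    IsIntervalClosed (Set.univ : Set α) ∧
    (∀ I J : Set α, IsIntervalClosed I → IsIntervalClosed J → IsIntervalClosed (I ∩ J)) ∧
    (∀ I : Set α, IsIntervalClosed I → I ≠ Set.univ →
        ∃ x ∉ I, IsIntervalClosed (I ∪ {x})) := by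
  simp only [isIntervalClosed_iff_ordConnected, Set.union_singleton]
  exact ⟨Set.ordConnected_empty, Set.ordConnected_univ, fun _ _ => .inter,
    fun _ hI hne => hI.exists_notMem_ordConnected_insert hne⟩
end

section
/- Let G be a group generated by elements g_1, ..., g_n satisfying g_i^2 = 1 for all i and (g_i g_j)^2 = 1 whenever |i − j| > 1. Then for any permutations ω, ν of {1, ..., n}, the products g_{ω(1)} g_{ω(2)} ⋯ g_{ω(n)} and g_{ν(1)} g_{ν(2)} ⋯ g_{ν(n)} are conjugate in G. -/
/-!
Involutions whose product is again an involution commute, so non-adjacent generators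
commute. Induct on the number of generators. In a word using each of
`g 0, …, g (n + 1)` once, a cyclic rotation (a conjugation) moves `g (n + 1)` to the end. It
commutes with every letter except `g n`, so it can then be moved left until it meets `g n`.
Merging the two into the single letter `g n * g (n + 1)` gives a word in `n + 1` generators
that still satisfy the commutation relations, and the induction hypothesis applies.
-/

open List

theorem commute_of_sq_eq_one {G : Type*} [Group G] {a b : G} (ha : a ^ 2 = 1) (hb : b ^ 2 = 1)
    (hab : (a * b) ^ 2 = 1) : Commute a b := by
  rw [pow_two, mul_eq_one_iff_eq_inv] at ha hb hab
  rw [commute_iff_eq]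
  calc a * b = (a * b)⁻¹ := hab
    _ = b * a := by rw [mul_inv_rev, ← ha, ← hb]

theorem isConj_prod_append_comm {G : Type*} [Group G] (l₁ l₂ : List G) :
    IsConj (l₁ ++ l₂).prod (l₂ ++ l₁).prod :=
  isConj_iff.2 ⟨l₁.prod⁻¹, by simp only [prod_append]; group⟩

theorem prod_map_update_mul {ι M : Type*} [DecidableEq ι] [Monoid M] {f : ι → M} {x : ι}
    {y : M} {l : List ι} (hl : l.Nodup) (hx : x ∈ l) (hy : ∀ z ∈ l, z ≠ x → Commute (f z) y) :
    (l.map (Function.update f x (f x * y))).prod = (l.map f).prod * y := by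
  induction l with
  | nil => simp at hx
  | cons z l ih =>
    obtain ⟨hzl, hl⟩ := nodup_cons.1 hl
    by_cases hzx : z = x
    · subst hzx
      have hfix : l.map (Function.update f z (f z * y)) = l.map f :=
        map_congr_left fun w hw => Function.update_of_ne (ne_of_mem_of_not_mem hw hzl) _ _
      have hcomm : Commute y (l.map f).prod := by
        refine Commute.list_prod_right _ _ (forall_mem_map.2 fun w hw => ?_)
        exact (hy w (mem_cons_of_mem _ hw) (ne_of_mem_of_not_mem hw hzl)).symm
      rw [map_cons, prod_cons, hfix, Function.update_self, map_cons, prod_cons, mul_assoc,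
        hcomm.eq, mul_assoc]
    · have hxl : x ∈ l := (mem_cons.1 hx).resolve_left (Ne.symm hzx)
      rw [map_cons, prod_cons, Function.update_of_ne hzx, ih hl hxl
        fun w hw => hy w (mem_cons_of_mem _ hw), map_cons, prod_cons, mul_assoc]

theorem isConj_prod_map_of_perm_range {G : Type*} [Group G] :
    ∀ (n : ℕ) (g : ℕ → G), (∀ i j, i + 1 < j → j < n → Commute (g i) (g j)) →
      ∀ {l : List ℕ}, l ~ range n → IsConj (l.map g).prod ((range n).map g).prod
  | 0, _, _, _, hl => by rw [perm_nil.1 hl]; rfl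
  | 1, _, _, _, hl => by rw [perm_singleton.1 hl]; rfl
  | n + 2, g, hg, l, hl => by
    obtain ⟨u, w, rfl⟩ := append_of_mem (hl.mem_iff.2 (mem_range.2 (Nat.lt_succ_self (n + 1))))
    have hwu : w ++ u ~ range (n + 1) := by
      refine perm_append_comm.trans (Perm.cons_inv (a := n + 1) ?_)
      exact perm_middle.symm.trans (hl.trans (range_succ ▸ perm_append_singleton _ _))
    set g' := Function.update g n (g n * g (n + 1))
    have hg' : ∀ i j, i + 1 < j → j < n + 1 → Commute (g' i) (g' j) := by
      intro i j hij hj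
      dsimp only [g']
      rw [Function.update_of_ne (by omega)]
      rcases eq_or_ne j n with rfl | hjn
      · rw [Function.update_self]
        exact (hg i j hij (by omega)).mul_right (hg i (j + 1) (by omega) (by omega))
      · rw [Function.update_of_ne hjn]
        exact hg i j hij (by omega)
    have hcomm : ∀ l : List ℕ, l ~ range (n + 1) → ∀ z ∈ l, z ≠ n → Commute (g z) (g (n + 1)) :=
      fun l hl z hz hzn => hg z (n + 1) (by have := mem_range.1 (hl.mem_iff.1 hz); omega) (by omega)
    have hmerge : ∀ l : List ℕ, l ~ range (n + 1) → (l.map g').prod = (l.map g).prod * g (n + 1) :=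
      fun l hl => prod_map_update_mul (hl.nodup_iff.2 nodup_range)
        (hl.mem_iff.2 (mem_range.2 n.lt_succ_self)) (hcomm l hl)
    have hrot : IsConj ((u ++ (n + 1) :: w).map g).prod ((w ++ u).map g').prod := by
      rw [hmerge _ hwu, ← prod_singleton (x := g (n + 1)), ← prod_append]
      simpa only [map_append, map_cons, append_assoc, singleton_append]
        using isConj_prod_append_comm (u.map g ++ [g (n + 1)]) (w.map g)
    have htop : ((range (n + 1)).map g').prod = ((range (n + 2)).map g).prod := by
      rw [hmerge _ (Perm.refl _), range_succ (n := n + 1), map_append, prod_append,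
        map_singleton, prod_singleton]
    exact htop ▸ hrot.trans (isConj_prod_map_of_perm_range (n + 1) g' hg' hwu)

theorem conjugate_products_of_commuting_involutions_general {G : Type*} [Group G] (n : ℕ)
    (g : Fin n → G)
    (hinv : ∀ i, g i ^ 2 = 1)
    (hcomm : ∀ i j : Fin n, 1 < Nat.dist i.val j.val → (g i * g j) ^ 2 = 1)
    (ω ν : Equiv.Perm (Fin n)) :
    IsConj (((List.finRange n).map fun i => g (ω i)).prod)
      (((List.finRange n).map fun i => g (ν i)).prod) := by
  let f : ℕ → G := fun i => if h : i < n then g ⟨i, h⟩ else 1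
  have hf : ∀ i j, i + 1 < j → j < n → Commute (f i) (f j) := fun i j hij hj => by
    simp only [f, dif_pos hj, dif_pos (show i < n by omega)]
    exact commute_of_sq_eq_one (hinv _) (hinv _) (hcomm _ _ (by simp only [Nat.dist]; omega))
  have hconj : ∀ σ : Equiv.Perm (Fin n),
      IsConj ((finRange n).map fun i => g (σ i)).prod ((range n).map f).prod := fun σ => by
    have hperm : ((finRange n).map σ).map (↑) ~ range n :=
      map_coe_finRange_eq_range ▸ σ.map_finRange_perm.map _
    convert isConj_prod_map_of_perm_range n f hf hperm using 2
    simp [f]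
  exact (hconj ω).trans (hconj ν).symm

/-- Lemma of Humphreys, as used by Striker--Williams: let `G` be a
group generated by involutions `g 0, ..., g (n-1)` such that `(g i * g j)^2 = 1`
whenever `|i - j| > 1`. Then for any permutations `ω, ν` of the indices, the ordered
products `g (ω 0) * ⋯ * g (ω (n-1))` and `g (ν 0) * ⋯ * g (ν (n-1))` are conjugate
in `G`. -/
theorem conjugate_products_of_commuting_involutions {G : Type*} [Group G] (n : ℕ)
    (g : Fin n → G)
    (hgen : Subgroup.closure (Set.range g) = ⊤)
    (hinv : ∀ i, g i ^ 2 = 1)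
    (hcomm : ∀ i j : Fin n, 1 < Nat.dist i.val j.val → (g i * g j) ^ 2 = 1)
    (ω ν : Equiv.Perm (Fin n)) :
    IsConj (((List.finRange n).map fun i => g (ω i)).prod)
      (((List.finRange n).map fun i => g (ν i)).prod) :=
  conjugate_products_of_commuting_involutions_general n g hinv hcomm ω ν
end
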